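/- Suppose the experiment Π = (S, π) is NOT a weighted garbling of the experiment Π' = (S', π'). Then for every full-support prior μ ∈ Δ(Θ) there exist a signal s ∈ S with positive probability under (Π, μ), a finite action set A, and a utility u: A × Θ → ℝ such that max_{a∈A} ∑_θ u(a,θ)·μ^Π_s(θ) > 0 > max_{a∈A} ∑_θ u(a,θ)·μ^{Π'}_{s'}(θ) for every signal s' ∈ S' with positive probability under (Π', μ), where μ^Π_s and μ^{Π'}_{s'} are the respective posteriors under prior μ. -/

import Mathlib

open scoped InnerProductSpace

lemma isClosed_fg_cone {n ι : Type*} [Fintype n] [Fintype ι]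
    (g : ι → EuclideanSpace ℝ n) (hg : ∀ i j, 0 ≤ g i j) :
    IsClosed {x : EuclideanSpace ℝ n | ∃ β : ι → ℝ, (∀ i, 0 ≤ β i) ∧ x = ∑ i, β i • g i} := by
  classical
  set C : Set (EuclideanSpace ℝ n) :=
    {x | ∃ β : ι → ℝ, (∀ i, 0 ≤ β i) ∧ x = ∑ i, β i • g i} with hC
  set σ : EuclideanSpace ℝ n → ℝ := fun y => ∑ j, y j with hσdef
  have hσ : Continuous σ := by
    apply continuous_finset_sum
    intro j _
    exact (EuclideanSpace.proj (𝕜 := ℝ) j).continuous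
  have hσg : ∀ i, 0 ≤ σ (g i) := fun i => Finset.sum_nonneg fun j _ => hg i j
  have hσg' : ∀ i, g i ≠ 0 → 0 < σ (g i) := by
    intro i hi
    have : ∃ j, g i j ≠ 0 := by
      by_contra h
      push_neg at h
      exact hi (PiLp.ext fun j => by simpa using h j)
    obtain ⟨j, hj⟩ := this
    exact Finset.sum_pos' (fun j _ => hg i j)
      ⟨j, Finset.mem_univ j, lt_of_le_of_ne (hg i j) (Ne.symm hj)⟩
  have hσsum : ∀ β : ι → ℝ, σ (∑ i, β i • g i) = ∑ i, β i * σ (g i) := by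
    intro β
    calc σ (∑ i, β i • g i) = ∑ j, ∑ i, β i * g i j := by
          apply Finset.sum_congr rfl
          intro j _
          rw [WithLp.ofLp_sum, Finset.sum_apply]
          rfl
      _ = ∑ i, ∑ j, β i * g i j := Finset.sum_comm
      _ = ∑ i, β i * σ (g i) := by
          apply Finset.sum_congr rfl
          intro i _
          rw [Finset.mul_sum]
  by_cases hT : ∀ i, g i = 0
  · have : C = {0} := by
      ext x
      constructor
      · rintro ⟨β, -, rfl⟩
        simp [hT]
      · rintro rfl
        exact ⟨0, fun i => le_refl 0, by simp⟩
    rw [this]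
    exact isClosed_singleton
  push_neg at hT
  obtain ⟨i₀, hi₀⟩ := hT
  set T : Finset ι := Finset.univ.filter fun i => g i ≠ 0 with hTdef
  have hTne : T.Nonempty := ⟨i₀, by simp [hTdef, hi₀]⟩
  set m : ℝ := T.inf' hTne fun i => σ (g i) with hm
  have hm0 : 0 < m := by
    rw [hm, Finset.lt_inf'_iff]
    intro i hi
    exact hσg' i (by simpa [hTdef] using hi)
  rw [← closure_subset_iff_isClosed]
  intro x hx
  set M : ℝ := σ x + 1 with hM
  set U : Set (EuclideanSpace ℝ n) := {y | σ y < M} with hU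
  have hUo : IsOpen U := isOpen_lt hσ continuous_const
  have hxU : x ∈ U := by simp [hU, hM]
  have hxCU : x ∈ closure (C ∩ U) := by
    rw [mem_closure_iff] at hx ⊢
    intro O hO hxO
    obtain ⟨y, ⟨hyO, hyU⟩, hyC⟩ := hx (O ∩ U) (hO.inter hUo) ⟨hxO, hxU⟩
    exact ⟨y, hyO, hyC, hyU⟩
  set K : Set (ι → ℝ) := Set.Icc 0 (fun _ => M / m) with hK
  have hKc : IsCompact K := isCompact_Icc
  set L : (ι → ℝ) → EuclideanSpace ℝ n := fun β => ∑ i, β i • g i with hL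
  have hLc : Continuous L := by
    apply continuous_finset_sum
    intro i _
    exact (continuous_apply i).smul continuous_const
  have himg : C ∩ U ⊆ L '' K := by
    rintro y ⟨⟨β, hβ0, rfl⟩, hyU⟩
    have hyM : ∑ t, β t * σ (g t) < M := by
      rw [← hσsum β]
      exact hyU
    refine ⟨fun i => if g i = 0 then 0 else β i, ?_, ?_⟩
    · rw [hK, Set.mem_Icc]
      constructor
      · intro i
        simp only [Pi.zero_apply]
        split
        · exact le_refl 0
        · exact hβ0 i
      · intro i
        simp only
        split
        · have hM0 : (0:ℝ) < M := lt_of_le_of_lt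
            (Finset.sum_nonneg fun t _ => mul_nonneg (hβ0 t) (hσg t)) hyM
          exact div_nonneg hM0.le hm0.le
        · rename_i hgi
          have h3 : m ≤ σ (g i) := Finset.inf'_le _ (by simp [hTdef, hgi])
          have h1 : β i * σ (g i) ≤ ∑ t, β t * σ (g t) :=
            Finset.single_le_sum (f := fun t => β t * σ (g t))
              (fun t _ => mul_nonneg (hβ0 t) (hσg t)) (Finset.mem_univ i)
          have : β i * m ≤ M :=
            le_of_lt (lt_of_le_of_lt (le_trans
              (mul_le_mul_of_nonneg_left h3 (hβ0 i)) h1) hyM)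
          rw [le_div_iff₀ hm0]
          exact this
    · rw [hL]
      apply Finset.sum_congr rfl
      intro i _
      simp only
      split
      · rename_i h
        simp [h]
      · rfl
  have hximg : x ∈ L '' K := by
    have h := closure_mono himg hxCU
    rwa [IsCompact.isClosed (hKc.image hLc) |>.closure_eq] at h
  obtain ⟨β, hβK, rfl⟩ := hximg
  refine ⟨β, fun i => ?_, rfl⟩
  have := (Set.mem_Icc.mp hβK).1 i
  simpa using this



/-- The posterior belief on Θ induced by experiment π, prior μ and signal s. -/
noncomputable def posterior {Θ S : Type*} [Fintype Θ]
    (π : S → Θ → ℝ) (μ : Θ → ℝ) (s : S) : Θ → ℝ :=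
  fun θ => π s θ * μ θ / ∑ θ', π s θ' * μ θ'

/-- if Π is NOT a weighted garbling of Π', then for every full-support
prior μ there exist a positive-probability signal s of Π, a finite action set A, and a
utility u such that the best expected payoff at the posterior μ^Π_s is positive while
the best expected payoff at every positive-probability posterior μ^{Π'}_{s'} of Π' is
negative. -/
theorem not_weighted_garbling_separating_decision_problem
    {Θ S S' : Type*} [Fintype Θ] [Nonempty Θ]
    [Fintype S] [Nonempty S] [Fintype S'] [Nonempty S']
    (π : S → Θ → ℝ) (π' : S' → Θ → ℝ)
    (hπ0 : ∀ s θ, 0 ≤ π s θ) (hπ1 : ∀ θ, ∑ s, π s θ = 1)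
    (hπ'0 : ∀ s' θ, 0 ≤ π' s' θ) (hπ'1 : ∀ θ, ∑ s', π' s' θ = 1)
    -- Π is NOT a weighted garbling of Π'
    (hnwg : ¬ ∃ γ : S' → ℝ, (∀ s', 0 ≤ γ s') ∧ (∀ θ, ∑ s', γ s' * π' s' θ = 1) ∧
      ∃ φ : S' → S → ℝ, (∀ s' s, 0 ≤ φ s' s) ∧ (∀ s', ∑ s, φ s' s = 1) ∧
        ∀ s θ, π s θ = ∑ s', φ s' s * γ s' * π' s' θ) :
    ∀ μ : Θ → ℝ, (∀ θ, 0 < μ θ) → (∑ θ, μ θ = 1) →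
      ∃ s : S, 0 < (∑ θ, π s θ * μ θ) ∧
        ∃ (A : Type) (_ : Fintype A) (_ : Nonempty A) (u : A → Θ → ℝ),
          (0 < ⨆ a : A, ∑ θ, u a θ * posterior π μ s θ) ∧
          ∀ s' : S', 0 < (∑ θ, π' s' θ * μ θ) →
            (⨆ a : A, ∑ θ, u a θ * posterior π' μ s' θ) < 0 := by
  intro μ hμpos hμ1
  classical
  -- Step 1: some signal of Π is not a nonneg combination of rows of Π'
  have hstep1 : ∃ s : S, ¬ ∃ β : S' → ℝ, (∀ s', 0 ≤ β s') ∧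
      ∀ θ, π s θ = ∑ s', β s' * π' s' θ := by
    by_contra h
    push_neg at h
    choose B hB0 hBeq using h
    apply hnwg
    refine ⟨fun s' => ∑ t, B t s', fun s' => Finset.sum_nonneg fun t _ => hB0 t s', ?_, ?_⟩
    · intro θ
      calc ∑ s', (∑ t, B t s') * π' s' θ = ∑ s', ∑ t, B t s' * π' s' θ := by
            exact Finset.sum_congr rfl fun s' _ => Finset.sum_mul ..
        _ = ∑ t, ∑ s', B t s' * π' s' θ := Finset.sum_comm
        _ = ∑ t, π t θ := Finset.sum_congr rfl fun t _ => (hBeq t θ).symm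
        _ = 1 := hπ1 θ
    · refine ⟨fun s' t => if (∑ r, B r s') = 0 then (Fintype.card S : ℝ)⁻¹
        else B t s' / (∑ r, B r s'), ?_, ?_, ?_⟩
      · intro s' t
        dsimp only
        split
        · positivity
        · exact div_nonneg (hB0 t s') (Finset.sum_nonneg fun r _ => hB0 r s')
      · intro s'
        by_cases hγ : (∑ r, B r s') = 0
        · simp only [if_pos hγ, Finset.sum_const, nsmul_eq_mul, Finset.card_univ]
          rw [mul_inv_cancel₀]
          exact_mod_cast Fintype.card_ne_zero
        · simp only [if_neg hγ]
          rw [← Finset.sum_div, div_self hγ]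
      · intro t θ
        rw [hBeq t θ]
        apply Finset.sum_congr rfl
        intro s' _
        dsimp only
        by_cases hγ : (∑ r, B r s') = 0
        · have hB : B t s' = 0 :=
            (Finset.sum_eq_zero_iff_of_nonneg (fun r _ => hB0 r s')).mp hγ t (Finset.mem_univ t)
          rw [if_pos hγ, hγ, hB]
          ring
        · rw [if_neg hγ, div_mul_cancel₀ _ hγ]
  obtain ⟨s, hs⟩ := hstep1
  -- Step 2: this signal has positive probability
  have hPrs : 0 < ∑ θ, π s θ * μ θ := by
    rcases lt_or_ge 0 (∑ θ, π s θ * μ θ) with h | h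
    · exact h
    have h0 : ∑ θ, π s θ * μ θ = 0 :=
      le_antisymm h (Finset.sum_nonneg fun θ _ => mul_nonneg (hπ0 s θ) (hμpos θ).le)
    exfalso
    apply hs
    refine ⟨0, fun _ => le_refl 0, fun θ => ?_⟩
    have hz : π s θ * μ θ = 0 :=
      (Finset.sum_eq_zero_iff_of_nonneg
        (fun θ _ => mul_nonneg (hπ0 s θ) (hμpos θ).le)).mp h0 θ (Finset.mem_univ θ)
    have : π s θ = 0 := (mul_eq_zero.mp hz).resolve_right (hμpos θ).ne'
    simp [this]
  -- Step 3: separation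
  set g : S' → EuclideanSpace ℝ Θ := fun s' => WithLp.toLp 2 (π' s' : Θ → ℝ) with hgdef
  set p : EuclideanSpace ℝ Θ := WithLp.toLp 2 (π s : Θ → ℝ) with hpdef
  set K : ConvexCone ℝ (EuclideanSpace ℝ Θ) :=
    { carrier := {x | ∃ β : S' → ℝ, (∀ s', 0 ≤ β s') ∧ x = ∑ s', β s' • g s'}
      smul_mem' := by
        rintro c hc x ⟨β, hβ, rfl⟩
        refine ⟨fun i => c * β i, fun i => mul_nonneg hc.le (hβ i), ?_⟩
        rw [Finset.smul_sum]
        exact Finset.sum_congr rfl fun i _ => by dsimp only; rw [smul_smul]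
      add_mem' := by
        rintro x ⟨β₁, hβ₁, rfl⟩ y ⟨β₂, hβ₂, rfl⟩
        refine ⟨fun i => β₁ i + β₂ i, fun i => add_nonneg (hβ₁ i) (hβ₂ i), ?_⟩
        rw [← Finset.sum_add_distrib]
        exact Finset.sum_congr rfl fun i _ => by dsimp only; rw [add_smul] } with hKdef
  have hKne : (K : Set (EuclideanSpace ℝ Θ)).Nonempty :=
    ⟨0, 0, fun _ => le_refl 0, by simp⟩
  have hKclosed : IsClosed (K : Set (EuclideanSpace ℝ Θ)) :=
    isClosed_fg_cone g fun i j => hπ'0 i j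
  have hpK : p ∉ K := by
    rintro ⟨β, hβ, hpeq⟩
    apply hs
    refine ⟨β, hβ, fun θ => ?_⟩
    calc p θ = (∑ s', β s' • g s') θ := congrArg (fun x : EuclideanSpace ℝ Θ => x θ) hpeq
      _ = ∑ s', β s' * π' s' θ := by
          rw [WithLp.ofLp_sum, Finset.sum_apply]
          rfl
  obtain ⟨y, hy1, hy2⟩ :=
    ProperCone.hyperplane_separation' (E := EuclideanSpace ℝ Θ)
      (C := ({ carrier := (K : Set (EuclideanSpace ℝ Θ))
               zero_mem' := ⟨0, fun _ => le_refl 0, by simp⟩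
               add_mem' := fun hx hy => K.add_mem hx hy
               smul_mem' := by
                 rintro c x ⟨β, hβ, rfl⟩
                 refine ⟨fun i => (c : ℝ) * β i, fun i => mul_nonneg c.2 (hβ i), ?_⟩
                 change (c : ℝ) • (∑ s', β s' • g s') = _
                 rw [Finset.smul_sum]
                 exact Finset.sum_congr rfl fun i _ => by rw [smul_smul]
               isClosed' := hKclosed } : ProperCone ℝ (EuclideanSpace ℝ Θ))) hpK
  set v : Θ → ℝ := fun θ => -(y θ) with hvdef
  have hV : 0 < ∑ θ, v θ * π s θ := by
    have hi : ⟪y, p⟫_ℝ = ∑ θ, y θ * π s θ := by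
      simp [PiLp.inner_apply, RCLike.inner_apply, hpdef]
      exact Finset.sum_congr rfl fun _ _ => mul_comm _ _
    have : 0 < -∑ θ, y θ * π s θ := by rw [← hi, real_inner_comm]; linarith
    calc (0:ℝ) < -∑ θ, y θ * π s θ := this
      _ = ∑ θ, v θ * π s θ := by
          rw [← Finset.sum_neg_distrib]
          exact Finset.sum_congr rfl fun θ _ => by simp [hvdef]
  have hV' : ∀ s', ∑ θ, v θ * π' s' θ ≤ 0 := by
    intro s'
    have hmem : g s' ∈ K := by
      refine ⟨fun t => if t = s' then 1 else 0, fun t => by positivity, ?_⟩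
      symm
      simp [ite_smul]
    have h0 := hy1 _ hmem
    have hi : ⟪g s', y⟫_ℝ = ∑ θ, π' s' θ * y θ := by
      simp [PiLp.inner_apply, RCLike.inner_apply, hgdef]
      exact Finset.sum_congr rfl fun _ _ => mul_comm _ _
    rw [hi] at h0
    have : ∑ θ, v θ * π' s' θ = -∑ θ, π' s' θ * y θ := by
      rw [← Finset.sum_neg_distrib]
      exact Finset.sum_congr rfl fun θ _ => by simp [hvdef]; ring
    rw [this]
    linarith
  -- Step 4: build the decision problem
  set Prs : ℝ := ∑ θ, π s θ * μ θ with hPrsdef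
  set V : ℝ := ∑ θ, v θ * π s θ with hVdef
  set ε : ℝ := V / (2 * Prs) with hεdef
  have hε : 0 < ε := div_pos hV (by positivity)
  have hval : ∀ ρ : Θ → ℝ, 0 < (∑ θ, ρ θ * μ θ) →
      ∑ θ, (v θ / μ θ - ε) * (ρ θ * μ θ / (∑ θ', ρ θ' * μ θ')) =
        (∑ θ, v θ * ρ θ) / (∑ θ, ρ θ * μ θ) - ε := by
    intro ρ hP
    calc ∑ θ, (v θ / μ θ - ε) * (ρ θ * μ θ / (∑ θ', ρ θ' * μ θ'))
        = ∑ θ, (v θ * ρ θ / (∑ θ', ρ θ' * μ θ')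
            - ε * (ρ θ * μ θ) / (∑ θ', ρ θ' * μ θ')) := by
          apply Finset.sum_congr rfl
          intro θ _
          have h1 : μ θ ≠ 0 := (hμpos θ).ne'
          have h2 : (∑ θ', ρ θ' * μ θ') ≠ 0 := hP.ne'
          field_simp
      _ = (∑ θ, v θ * ρ θ) / (∑ θ', ρ θ' * μ θ')
            - ε * ((∑ θ, ρ θ * μ θ) / (∑ θ', ρ θ' * μ θ')) := by
          rw [Finset.sum_sub_distrib, ← Finset.sum_div, ← Finset.sum_div, ← Finset.mul_sum,
            mul_div_assoc]
      _ = (∑ θ, v θ * ρ θ) / (∑ θ, ρ θ * μ θ) - ε := by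
          rw [div_self hP.ne', mul_one]
  refine ⟨s, hPrs, PUnit, inferInstance, inferInstance, fun _ θ => v θ / μ θ - ε, ?_, ?_⟩
  · rw [ciSup_unique]
    show 0 < ∑ θ, (v θ / μ θ - ε) * (π s θ * μ θ / (∑ θ', π s θ' * μ θ'))
    rw [hval (π s) hPrs]
    have hPne : Prs ≠ 0 := hPrs.ne'
    have : V / Prs - ε = ε := by
      rw [hεdef]
      field_simp
      ring
    rw [← hPrsdef, ← hVdef, this]
    exact hε
  · intro s' hPrs'
    rw [ciSup_unique]
    show (∑ θ, (v θ / μ θ - ε) * (π' s' θ * μ θ / (∑ θ', π' s' θ' * μ θ'))) < 0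
    rw [hval (π' s') hPrs']
    have h1 : (∑ θ, v θ * π' s' θ) / (∑ θ, π' s' θ * μ θ) ≤ 0 :=
      div_nonpos_of_nonpos_of_nonneg (hV' s') hPrs'.le
    linarith
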